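/- In the ring R = k[x,y,z,u]/(x²+yz, xy−yu, xz, xu, y²), the element yz is nonzero and lies in the socle of R; that is, yz ≠ 0 in R and 𝔪·(yz) = 0, where 𝔪 = (x,y,z,u) is the maximal ideal generated by the residue classes of the variables. -/

import Mathlib

open MvPolynomial

set_option synthInstance.maxHeartbeats 1000000
set_option maxHeartbeats 1000000

noncomputable section

/-- The defining ideal `(x²+yz, xy−yu, xz, xu, y²)` of Conca's ring, with
`x = X 0`, `y = X 1`, `z = X 2`, `u = X 3`. -/
def concaIdeal (k : Type*) [Field k] : Ideal (MvPolynomial (Fin 4) k) :=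
  Ideal.span {X 0 ^ 2 + X 1 * X 2, X 0 * X 1 - X 1 * X 3, X 0 * X 2, X 0 * X 3, X 1 ^ 2}

/-- The ring `R = k[x,y,z,u]/(x²+yz, xy−yu, xz, xu, y²)`. -/
abbrev ConcaRing (k : Type*) [Field k] := MvPolynomial (Fin 4) k ⧸ concaIdeal k

/-- The residue classes of the variables `x, y, z, u` in `R`. -/
def cv (k : Type*) [Field k] (i : Fin 4) : ConcaRing k :=
  Ideal.Quotient.mk (concaIdeal k) (X i)

/-! The functional `q ↦ coeff_{yz} q - coeff_{x²} q` on `k[x,y,z,u]` vanishes on the ideal: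
the generators are quadrics on which it vanishes, and multiplying a quadric by `p` changes its
degree-2 part only by the factor `p(0)`. As it takes the value `1` on `yz`, we get `yz ∉ I`.
The socle claim is the identities `x·yz = y·xz`, `y·yz = y²·z`, `z·yz = z(x² + yz) - x·xz`
and `u·yz = u(x² + yz) - x·xu`. -/

theorem AddMonoidHom.map_eq_zero_of_mem_span {A M : Type*} [CommSemiring A] [AddCommMonoid M]
    (φ : A →+ M) {s : Set A} (hs : ∀ g ∈ s, ∀ p, φ (p * g) = 0) {q : A}
    (hq : q ∈ Ideal.span s) : φ q = 0 := by
  let J : Ideal A :=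
    { carrier := {q | ∀ p, φ (p * q) = 0}
      add_mem' := fun ha hb p => by simp [mul_add, ha p, hb p]
      zero_mem' := fun p => by simp
      smul_mem' := fun c q hq p => by simpa [smul_eq_mul, mul_assoc] using hq (p * c) }
  simpa using (Ideal.span_le (I := J)).2 hs hq 1

theorem MvPolynomial.IsHomogeneous.coeff_mul_of_degree_eq {σ R : Type*} [CommSemiring R]
    {g : MvPolynomial σ R} {d : ℕ} (hg : g.IsHomogeneous d) (p : MvPolynomial σ R)
    {n : σ →₀ ℕ} (hn : n.degree = d) : coeff n (p * g) = coeff 0 p * coeff n g := by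
  classical
  rw [coeff_mul, Finset.sum_eq_single (0, n) _ (by simp)]
  rintro ⟨a, b⟩ hab hne
  rw [Finset.HasAntidiagonal.mem_antidiagonal] at hab
  dsimp only at hab ⊢
  by_cases hb : coeff b g = 0
  · rw [hb, mul_zero]
  have hbd : b.degree = d := by_contra fun h => hb (hg.coeff_eq_zero h)
  have ha : a = 0 := by
    rw [← Finsupp.degree_eq_zero_iff]
    have := congrArg Finsupp.degree hab
    rw [map_add] at this
    omega
  subst ha
  simp_all

namespace ConcaRing

variable {k : Type*} [Field k]

def generators (k : Type*) [Field k] : Set (MvPolynomial (Fin 4) k) :=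
  {X 0 ^ 2 + X 1 * X 2, X 0 * X 1 - X 1 * X 3, X 0 * X 2, X 0 * X 3, X 1 ^ 2}

theorem concaIdeal_eq_span_generators : concaIdeal k = Ideal.span (generators k) := rfl

theorem isHomogeneous_of_mem_generators {g : MvPolynomial (Fin 4) k} (hg : g ∈ generators k) :
    g.IsHomogeneous 2 := by
  have hX := isHomogeneous_X k (σ := Fin 4)
  rcases hg with rfl | rfl | rfl | rfl | rfl
  · exact (isHomogeneous_X_pow 0 2).add ((hX 1).mul (hX 2))
  · exact ((hX 0).mul (hX 1)).sub ((hX 1).mul (hX 3))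
  · exact (hX 0).mul (hX 2)
  · exact (hX 0).mul (hX 3)
  · exact isHomogeneous_X_pow 1 2

theorem coeff_yz_eq_coeff_xx_of_mem_generators {g : MvPolynomial (Fin 4) k}
    (hg : g ∈ generators k) :
    coeff (Finsupp.single 1 1 + Finsupp.single 2 1) g = coeff (Finsupp.single 0 2) g := by
  rcases hg with rfl | rfl | rfl | rfl | rfl <;>
    simp [coeff_X_pow, coeff_X_mul', coeff_X, Finsupp.ext_iff, Fin.forall_fin_succ,
      Finsupp.single_apply]

theorem coeff_yz_eq_coeff_xx_of_mem {q : MvPolynomial (Fin 4) k} (hq : q ∈ concaIdeal k) :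
    coeff (Finsupp.single 1 1 + Finsupp.single 2 1) q = coeff (Finsupp.single 0 2) q := by
  rw [concaIdeal_eq_span_generators] at hq
  rw [← sub_eq_zero]
  refine AddMonoidHom.map_eq_zero_of_mem_span (coeffAddMonoidHom _ - coeffAddMonoidHom _)
    (fun g hg p => ?_) hq
  have hg₂ := isHomogeneous_of_mem_generators hg
  simp only [AddMonoidHom.sub_apply, coeffAddMonoidHom_apply]
  rw [hg₂.coeff_mul_of_degree_eq p (by simp), hg₂.coeff_mul_of_degree_eq p (by simp),
    ← mul_sub, coeff_yz_eq_coeff_xx_of_mem_generators hg, sub_self, mul_zero]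

theorem X_one_mul_X_two_notMem_concaIdeal :
    (X 1 * X 2 : MvPolynomial (Fin 4) k) ∉ concaIdeal k := fun h => by
  simpa [coeff_X_mul', coeff_X, Finsupp.ext_iff, Fin.forall_fin_succ, Finsupp.single_apply]
    using coeff_yz_eq_coeff_xx_of_mem h

theorem mul_cv_one_mul_cv_two_eq_zero {a : ConcaRing k}
    (ha : a ∈ ({cv k 0, cv k 1, cv k 2, cv k 3} : Set (ConcaRing k))) :
    a * (cv k 1 * cv k 2) = 0 := by
  have rel (g) (hg : g ∈ generators k) : Ideal.Quotient.mk (concaIdeal k) g = 0 :=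
    Ideal.Quotient.eq_zero_iff_mem.2 (concaIdeal_eq_span_generators.ge (Ideal.subset_span hg))
  have hxx : cv k 0 ^ 2 + cv k 1 * cv k 2 = 0 := by
    simp only [cv, ← map_pow, ← map_mul, ← map_add]; exact rel _ (by simp [generators])
  have hxz : cv k 0 * cv k 2 = 0 := by
    simp only [cv, ← map_mul]; exact rel _ (by simp [generators])
  have hxu : cv k 0 * cv k 3 = 0 := by
    simp only [cv, ← map_mul]; exact rel _ (by simp [generators])
  have hyy : cv k 1 ^ 2 = 0 := by
    simp only [cv, ← map_pow]; exact rel _ (by simp [generators])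
  rcases ha with rfl | rfl | rfl | rfl
  · linear_combination cv k 1 * hxz
  · linear_combination cv k 2 * hyy
  · linear_combination cv k 2 * hxx - cv k 0 * hxz
  · linear_combination cv k 3 * hxx - cv k 0 * hxu

end ConcaRing

theorem stmt_7 (k : Type*) [Field k] :
    cv k 1 * cv k 2 ≠ 0 ∧
    Ideal.span {cv k 0, cv k 1, cv k 2, cv k 3} * Ideal.span {cv k 1 * cv k 2} =
      (⊥ : Ideal (ConcaRing k)) := by
  refine ⟨?_, ?_⟩
  · rw [cv, cv, ← map_mul, Ne, Ideal.Quotient.eq_zero_iff_mem]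
    exact ConcaRing.X_one_mul_X_two_notMem_concaIdeal
  · rw [Ideal.span_mul_span', Ideal.span_eq_bot]
    rintro _ ⟨_, ha, _, rfl, rfl⟩
    exact ConcaRing.mul_cv_one_mul_cv_two_eq_zero ha
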